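/- If (M →^∂ N, ·, {−,−}) is a perfect braided crossed module of Lie K-algebras, then Φ : (N ⊗ N →^Id N ⊗ N, [−,−], [−,−]) → (M →^∂ N, ·, {−,−}), with Φ₁(n ⊗ n') = {n,n'} and Φ₂(n ⊗ n') = [n,n'], is the universal central extension: for every central extension f : 𝒵 → (M →^∂ N) there exists a unique morphism h with Φ = f ∘ h. -/

import Mathlib

universe u

/-- The Lie bracket as a bilinear map. -/
def bracketMap (K : Type u) [CommRing K] (M : Type u) [LieRing M] [LieAlgebra K M] :
    M →ₗ[K] M →ₗ[K] M :=
  LinearMap.mk₂ K (fun a b => ⁅a, b⁆) add_lie smul_lie lie_add lie_smul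

/-- Axioms for a crossed module of Lie `K`-algebras `(d : M → N, act)`. -/
structure LieXMod (K : Type u) [CommRing K] (M N : Type u)
    [LieRing M] [LieAlgebra K M] [LieRing N] [LieAlgebra K N]
    (d : M →ₗ⁅K⁆ N) (act : N →ₗ[K] M →ₗ[K] M) : Prop where
  act_lie : ∀ n n' m, act ⁅n, n'⁆ m = act n (act n' m) - act n' (act n m)
  lie_act : ∀ n m m', act n ⁅m, m'⁆ = ⁅act n m, m'⁆ + ⁅m, act n m'⁆
  equivar : ∀ n m, d (act n m) = ⁅n, d m⁆
  peiffer : ∀ m m', act (d m) m' = ⁅m, m'⁆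

/-- Axioms `BLie1`–`BLie6` for a braiding on a crossed module of Lie algebras. -/
structure LieBraiding (K : Type u) [CommRing K] (M N : Type u)
    [LieRing M] [LieAlgebra K M] [LieRing N] [LieAlgebra K N]
    (d : M →ₗ⁅K⁆ N) (act : N →ₗ[K] M →ₗ[K] M)
    (br : N →ₗ[K] N →ₗ[K] M) : Prop where
  b1 : ∀ n n', d (br n n') = ⁅n, n'⁆
  b2 : ∀ m m', br (d m) (d m') = ⁅m, m'⁆
  b3 : ∀ m n, br (d m) n = - act n m
  b4 : ∀ n m, br n (d m) = act n m
  b5 : ∀ n n' n'', br n ⁅n', n''⁆ = br ⁅n, n'⁆ n'' - br ⁅n, n''⁆ n'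
  b6 : ∀ n n' n'', br ⁅n, n'⁆ n'' = br n ⁅n', n''⁆ - br n' ⁅n, n''⁆

/-- `T`, together with the bilinear pairing `t`, is the non-abelian tensor product
of the Lie algebras `A` and `B` acting on each other via `actAB` and `actBA`:
it satisfies the defining relations of the presentation and the universal property. -/
structure IsNATensor (K : Type u) [CommRing K] (A B : Type u)
    [LieRing A] [LieAlgebra K A] [LieRing B] [LieAlgebra K B]
    (actAB : A →ₗ[K] B →ₗ[K] B) (actBA : B →ₗ[K] A →ₗ[K] A)
    (T : Type u) [LieRing T] [LieAlgebra K T]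
    (t : A →ₗ[K] B →ₗ[K] T) : Prop where
  rel3a : ∀ a a' b, t ⁅a, a'⁆ b = t a (actAB a' b) - t a' (actAB a b)
  rel3b : ∀ a b b', t a ⁅b, b'⁆ = t (actBA b' a) b - t (actBA b a) b'
  rel4 : ∀ a b a' b', ⁅t a b, t a' b'⁆ = - t (actBA b a) (actAB a' b')
  lift : ∀ (C : Type u) [LieRing C] [LieAlgebra K C] (f : A →ₗ[K] B →ₗ[K] C),
      (∀ a a' b, f ⁅a, a'⁆ b = f a (actAB a' b) - f a' (actAB a b)) →
      (∀ a b b', f a ⁅b, b'⁆ = f (actBA b' a) b - f (actBA b a) b') →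
      (∀ a b a' b', ⁅f a b, f a' b'⁆ = - f (actBA b a) (actAB a' b')) →
      ∃! φ : T →ₗ⁅K⁆ C, ∀ a b, φ (t a b) = f a b

/-- `T` with pairing `t` is the non-abelian tensor square of `N` (adjoint actions). -/
def IsNATensorSq (K : Type u) [CommRing K] (N : Type u) [LieRing N] [LieAlgebra K N]
    (T : Type u) [LieRing T] [LieAlgebra K T] (t : N →ₗ[K] N →ₗ[K] T) : Prop :=
  IsNATensor K N N (bracketMap K N) (bracketMap K N) T t

/-!
On pure tensors `⁅a ⊗ b, a' ⊗ b'⁆ = ⁅a, b⁆ ⊗ ⁅a', b'⁆`, and since pure tensors span `N ⊗ N`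
this gives `⁅x, y⁆ = Φ₂ x ⊗ Φ₂ y` for all `x y`. Perfectness makes `Φ` surjective, and the
formula puts its kernel in the center.

For a central extension `f : X → (M → N)`, centrality says exactly that the braiding of `X`
descends along the surjection `f₂` to a bilinear map `g` on `N`. The braiding axioms for `X`
turn into the defining relations of `N ⊗ N` for `g`, so `a ⊗ b ↦ g a b` is a Lie morphism
`h₁`, and `h₂ := δ ∘ h₁`. Since `Φ₂` is onto, every `a ⊗ b` is a bracket `⁅x, y⁆`, on which
any morphism over `Φ` must take the value `g (Φ₂ x) (Φ₂ y)`; this gives uniqueness.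
-/

@[simp] theorem bracketMap_apply {K : Type u} [CommRing K] {M : Type u} [LieRing M]
    [LieAlgebra K M] (a b : M) : bracketMap K M a b = ⁅a, b⁆ := rfl

namespace LinearMap

variable {K : Type*} [CommRing K] {X Y N P Z : Type*} [AddCommGroup X] [Module K X]
  [AddCommGroup Y] [Module K Y] [AddCommGroup N] [Module K N] [AddCommGroup P] [Module K P]
  [AddCommGroup Z] [Module K Z]

theorem exists_comp_eq_of_ker_le {f : X →ₗ[K] N} (hf : Function.Surjective f)
    {g : X →ₗ[K] Z} (h : ker f ≤ ker g) : ∃ g' : N →ₗ[K] Z, g' ∘ₗ f = g :=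
  ⟨(ker f).liftQ g h ∘ₗ (f.quotKerEquivOfSurjective hf).symm.toLinearMap, by
    ext x; simp [quotKerEquivOfSurjective_symm_apply]⟩

theorem exists_compl₁₂_eq_of_surjective {f : X →ₗ[K] N} (hf : Function.Surjective f)
    {f' : Y →ₗ[K] P} (hf' : Function.Surjective f') {β : X →ₗ[K] Y →ₗ[K] Z}
    (hl : ∀ x, f x = 0 → ∀ y, β x y = 0) (hr : ∀ y, f' y = 0 → ∀ x, β x y = 0) :
    ∃ β' : N →ₗ[K] P →ₗ[K] Z, ∀ x y, β' (f x) (f' y) = β x y := by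
  obtain ⟨γ, hγ⟩ := exists_comp_eq_of_ker_le hf' (g := β.flip)
    fun y hy => LinearMap.ext fun x => hr y hy x
  have hγ_apply : ∀ x y, γ (f' y) x = β x y := fun x y => by
    rw [← comp_apply, hγ, flip_apply]
  obtain ⟨β', hβ'⟩ := exists_comp_eq_of_ker_le hf (g := γ.flip) fun x hx => by
    refine LinearMap.ext fun p => ?_
    obtain ⟨y, rfl⟩ := hf' p
    simpa [hγ_apply] using hl x hx y
  exact ⟨β', fun x y => by rw [← comp_apply β' f, hβ', flip_apply, hγ_apply]⟩

end LinearMap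

namespace IsNATensor

variable {K : Type u} [CommRing K] {A B : Type u} [LieRing A] [LieAlgebra K A] [LieRing B]
  [LieAlgebra K B] {actAB : A →ₗ[K] B →ₗ[K] B} {actBA : B →ₗ[K] A →ₗ[K] A}
  {T : Type u} [LieRing T] [LieAlgebra K T] {t : A →ₗ[K] B →ₗ[K] T}

theorem lieHom_ext (hT : IsNATensor K A B actAB actBA T t) {C : Type u} [LieRing C]
    [LieAlgebra K C] {φ ψ : T →ₗ⁅K⁆ C} (h : ∀ a b, φ (t a b) = ψ (t a b)) : φ = ψ := by
  have hlift := hT.lift C (t.compr₂ φ.toLinearMap)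
    (fun a a' b => by simp [hT.rel3a]) (fun a b b' => by simp [hT.rel3b])
    (fun a b a' b' => by simp [← LieHom.map_lie, hT.rel4])
  exact hlift.unique (fun _ _ => rfl) fun a b => (h a b).symm

theorem eq_top_of_tmul_mem (hT : IsNATensor K A B actAB actBA T t) (S : LieSubalgebra K T)
    (hS : ∀ a b, t a b ∈ S) : S = ⊤ := by
  let t' : A →ₗ[K] B →ₗ[K] S := t.codRestrict₂ S.toSubmodule.subtype Subtype.val_injective
    fun a b => ⟨⟨t a b, hS a b⟩, rfl⟩
  have ht' : ∀ a b, (t' a b : T) = t a b := t.codRestrict₂_apply S.toSubmodule.subtype _ _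
  obtain ⟨φ, hφ, -⟩ := hT.lift S t'
    (fun a a' b => Subtype.ext (by simpa [ht'] using hT.rel3a a a' b))
    (fun a b b' => Subtype.ext (by simpa [ht'] using hT.rel3b a b b'))
    (fun a b a' b' => Subtype.ext (by simpa [ht'] using hT.rel4 a b a' b'))
  have hφ_id : S.incl.comp φ = LieHom.id := hT.lieHom_ext fun a b => by simp [hφ, ht']
  refine eq_top_iff.2 fun x _ => ?_
  have hx : (φ x : T) = x := LieHom.congr_fun hφ_id x
  exact hx ▸ (φ x).2

theorem lie_mem_span_tmul (hT : IsNATensor K A B actAB actBA T t) {x y : T}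
    (hx : x ∈ Submodule.span K {z | ∃ a b, z = t a b})
    (hy : y ∈ Submodule.span K {z | ∃ a b, z = t a b}) :
    ⁅x, y⁆ ∈ Submodule.span K {z | ∃ a b, z = t a b} := by
  refine (?_ : Submodule.map₂ (bracketMap K T) _ _ ≤ _) (Submodule.apply_mem_map₂ _ hx hy)
  rw [Submodule.map₂_span_span, Submodule.span_le]
  rintro _ ⟨_, ⟨a, b, rfl⟩, _, ⟨a', b', rfl⟩, rfl⟩
  simp only [bracketMap_apply, hT.rel4]
  exact neg_mem (Submodule.subset_span ⟨_, _, rfl⟩)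

theorem span_tmul_eq_top (hT : IsNATensor K A B actAB actBA T t) :
    Submodule.span K {z | ∃ a b, z = t a b} = ⊤ := by
  have h := hT.eq_top_of_tmul_mem
    { Submodule.span K {z | ∃ a b, z = t a b} with lie_mem' := hT.lie_mem_span_tmul }
    fun a b => Submodule.subset_span ⟨a, b, rfl⟩
  exact congrArg LieSubalgebra.toSubmodule h

theorem linearMap_ext (hT : IsNATensor K A B actAB actBA T t) {C : Type*} [AddCommGroup C]
    [Module K C] {f g : T →ₗ[K] C} (h : ∀ a b, f (t a b) = g (t a b)) : f = g :=
  LinearMap.ext_on hT.span_tmul_eq_top fun _ ⟨a, b, hab⟩ => hab ▸ h a b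

end IsNATensor

theorem LieHom.surjective_of_lieSpan_eq_top {K : Type u} [CommRing K] {L L' : Type u}
    [LieRing L] [LieAlgebra K L] [LieRing L'] [LieAlgebra K L'] (f : L →ₗ⁅K⁆ L')
    {s : Set L'} (hs : LieSubalgebra.lieSpan K L' s = ⊤) (h : s ⊆ f.range) :
    Function.Surjective f :=
  f.range_eq_top.1 (top_le_iff.1 (hs ▸ LieSubalgebra.lieSpan_le.2 h))

namespace IsNATensorSq

variable {K : Type u} [CommRing K] {P : Type u} [LieRing P] [LieAlgebra K P]
  {T : Type u} [LieRing T] [LieAlgebra K T] {t : P →ₗ[K] P →ₗ[K] T}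

theorem lie_eq_tmul (hT : IsNATensorSq K P T t) {Φ : T →ₗ[K] P}
    (hΦ : ∀ n n', Φ (t n n') = ⁅n, n'⁆) (x y : T) : ⁅x, y⁆ = t (Φ x) (Φ y) := by
  have h : bracketMap K T = t.compl₁₂ Φ Φ :=
    hT.linearMap_ext fun a b => hT.linearMap_ext fun a' b' => by
      rw [LinearMap.compl₁₂_apply, hΦ, hΦ, bracketMap_apply, hT.rel4, bracketMap_apply,
        bracketMap_apply, ← lie_skew a b, map_neg, LinearMap.neg_apply]
  exact LinearMap.congr_fun₂ h x y

theorem lieHom_ext_of_lie (hT : IsNATensorSq K P T t) {Φ : T →ₗ[K] P}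
    (hΦ : ∀ n n', Φ (t n n') = ⁅n, n'⁆) (hΦ_surj : Function.Surjective Φ)
    {C : Type u} [LieRing C] [LieAlgebra K C] {φ ψ : T →ₗ⁅K⁆ C}
    (h : ∀ x y : T, φ ⁅x, y⁆ = ψ ⁅x, y⁆) : φ = ψ :=
  hT.lieHom_ext fun a b => by
    obtain ⟨x, rfl⟩ := hΦ_surj a
    obtain ⟨y, rfl⟩ := hΦ_surj b
    rw [← hT.lie_eq_tmul hΦ]
    exact h x y

end IsNATensorSq

namespace LieBraiding

variable {K : Type u} [CommRing K] {M N : Type u} [LieRing M] [LieAlgebra K M] [LieRing N]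
  [LieAlgebra K N] {d : M →ₗ⁅K⁆ N} {act : N →ₗ[K] M →ₗ[K] M} {br : N →ₗ[K] N →ₗ[K] M}

theorem lie_br_br (hX : LieXMod K M N d act) (hB : LieBraiding K M N d act br)
    (a b a' b' : N) : ⁅br a b, br a' b'⁆ = br ⁅a, b⁆ ⁅a', b'⁆ := by
  rw [← hX.peiffer, hB.b1, ← hB.b4, hB.b1]

theorem exists_lift_tensorSq_of_factor (hX : LieXMod K M N d act)
    (hB : LieBraiding K M N d act br) {P : Type u} [LieRing P] [LieAlgebra K P]
    {T : Type u} [LieRing T] [LieAlgebra K T] {t : P →ₗ[K] P →ₗ[K] T}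
    (hT : IsNATensorSq K P T t) {f : N →ₗ⁅K⁆ P} (hf : Function.Surjective f)
    {g : P →ₗ[K] P →ₗ[K] M} (hg : ∀ x y, g (f x) (f y) = br x y) :
    ∃ φ : T →ₗ⁅K⁆ M, ∀ a b, φ (t a b) = g a b := by
  refine (hT.lift M g ?_ ?_ ?_).exists
  · intro a a' b
    obtain ⟨x, rfl⟩ := hf a
    obtain ⟨x', rfl⟩ := hf a'
    obtain ⟨y, rfl⟩ := hf b
    simp only [bracketMap_apply, ← LieHom.map_lie, hg]
    exact hB.b6 x x' y
  · intro a b b'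
    obtain ⟨x, rfl⟩ := hf a
    obtain ⟨y, rfl⟩ := hf b
    obtain ⟨y', rfl⟩ := hf b'
    simp only [bracketMap_apply, ← LieHom.map_lie, hg, hB.b5 x y y', ← lie_skew x y,
      ← lie_skew x y', map_neg, LinearMap.neg_apply]
    abel
  · intro a b a' b'
    obtain ⟨x, rfl⟩ := hf a
    obtain ⟨y, rfl⟩ := hf b
    obtain ⟨x', rfl⟩ := hf a'
    obtain ⟨y', rfl⟩ := hf b'
    simp only [bracketMap_apply, ← LieHom.map_lie, hg, hB.lie_br_br hX, ← lie_skew x y,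
      map_neg, LinearMap.neg_apply]

end LieBraiding

theorem IsNATensorSq.existsUnique_lift_of_central {K : Type u} [CommRing K] {M N : Type u}
    [LieRing M] [LieAlgebra K M] [LieRing N] [LieAlgebra K N] {br : N →ₗ[K] N →ₗ[K] M}
    {T : Type u} [LieRing T] [LieAlgebra K T] {t : N →ₗ[K] N →ₗ[K] T}
    (hT : IsNATensorSq K N T t) {Φ₁ : T →ₗ⁅K⁆ M} {Φ₂ : T →ₗ⁅K⁆ N}
    (hΦ₁ : ∀ n n', Φ₁ (t n n') = br n n') (hΦ₂ : ∀ n n', Φ₂ (t n n') = ⁅n, n'⁆)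
    (hΦ₂_surj : Function.Surjective Φ₂) {X₁ X₂ : Type u} [LieRing X₁] [LieAlgebra K X₁]
    [LieRing X₂] [LieAlgebra K X₂] {δX : X₁ →ₗ⁅K⁆ X₂} {actX : X₂ →ₗ[K] X₁ →ₗ[K] X₁}
    {brX : X₂ →ₗ[K] X₂ →ₗ[K] X₁} (hXX : LieXMod K X₁ X₂ δX actX)
    (hBX : LieBraiding K X₁ X₂ δX actX brX) {f₁ : X₁ →ₗ⁅K⁆ M} {f₂ : X₂ →ₗ⁅K⁆ N}
    (hf_br : ∀ x y : X₂, f₁ (brX x y) = br (f₂ x) (f₂ y)) (hf₂ : Function.Surjective f₂)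
    (hker₂ : ∀ x : X₂, f₂ x = 0 → ∀ y : X₂, brX x y = 0 ∧ brX y x = 0) :
    ∃! h : (T →ₗ⁅K⁆ X₁) × (T →ₗ⁅K⁆ X₂),
      (∀ x y : T, h.1 ⁅x, y⁆ = actX (h.2 x) (h.1 y)) ∧
      (∀ x : T, δX (h.1 x) = h.2 x) ∧
      (∀ x y : T, h.1 ⁅x, y⁆ = brX (h.2 x) (h.2 y)) ∧
      (∀ x : T, f₁ (h.1 x) = Φ₁ x) ∧ (∀ x : T, f₂ (h.2 x) = Φ₂ x) := by
  obtain ⟨g, hg⟩ : ∃ g : N →ₗ[K] N →ₗ[K] X₁, ∀ x y, g (f₂ x) (f₂ y) = brX x y :=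
    LinearMap.exists_compl₁₂_eq_of_surjective (f := f₂.toLinearMap) hf₂ hf₂
      (fun x hx y => (hker₂ x hx y).1) fun y hy x => (hker₂ y hy x).2
  obtain ⟨h₁, hh₁⟩ := hBX.exists_lift_tensorSq_of_factor hXX hT hf₂ hg
  have hh₁_lie : ∀ x y : T, h₁ ⁅x, y⁆ = g (Φ₂ x) (Φ₂ y) := fun x y => by
    rw [hT.lie_eq_tmul (Φ := Φ₂.toLinearMap) hΦ₂, hh₁]
    rfl
  have hf₂δh₁ : ∀ x, f₂ (δX (h₁ x)) = Φ₂ x := LieHom.congr_fun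
    (hT.lieHom_ext (φ := f₂.comp (δX.comp h₁)) fun a b => by
      obtain ⟨x, rfl⟩ := hf₂ a
      obtain ⟨y, rfl⟩ := hf₂ b
      simp [hh₁, hg, hBX.b1, hΦ₂])
  have hf₁h₁ : ∀ x, f₁ (h₁ x) = Φ₁ x := LieHom.congr_fun
    (hT.lieHom_ext (φ := f₁.comp h₁) fun a b => by
      obtain ⟨x, rfl⟩ := hf₂ a
      obtain ⟨y, rfl⟩ := hf₂ b
      simp [hh₁, hg, hf_br, hΦ₁])
  have hbr : ∀ x y, h₁ ⁅x, y⁆ = brX (δX (h₁ x)) (δX (h₁ y)) := fun x y => by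
    rw [hh₁_lie, ← hg, hf₂δh₁, hf₂δh₁]
  refine ⟨(h₁, δX.comp h₁), ⟨fun x y => (hbr x y).trans (hBX.b4 _ _), fun _ => rfl, hbr,
    hf₁h₁, hf₂δh₁⟩, ?_⟩
  rintro ⟨h₁', h₂'⟩ ⟨-, hδ', hbr', -, hf₂'⟩
  obtain rfl : h₁' = h₁ := hT.lieHom_ext_of_lie (Φ := Φ₂.toLinearMap) hΦ₂ hΦ₂_surj
    fun x y => by rw [hbr', hh₁_lie, ← hg, hf₂', hf₂']
  exact Prod.ext rfl (LieHom.ext fun x => (hδ' x).symm)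

theorem universal_central_extension_of_perfect_general (K : Type u) [CommRing K] (M N : Type u) [LieRing M] [LieAlgebra K M]
    [LieRing N] [LieAlgebra K N] (d : M →ₗ⁅K⁆ N) (act : N →ₗ[K] M →ₗ[K] M)
    (br : N →ₗ[K] N →ₗ[K] M)
    (hB : LieBraiding K M N d act br)
    (hperf : LieSubalgebra.lieSpan K M {x : M | ∃ n n' : N, x = br n n'} = ⊤ ∧
      LieSubalgebra.lieSpan K N {x : N | ∃ a b : N, x = ⁅a, b⁆} = ⊤)
    (T : Type u) [LieRing T] [LieAlgebra K T] (t : N →ₗ[K] N →ₗ[K] T)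
    (hT : IsNATensorSq K N T t) (Φ₁ : T →ₗ⁅K⁆ M) (Φ₂ : T →ₗ⁅K⁆ N)
    (hΦ₁ : ∀ n n' : N, Φ₁ (t n n') = br n n')
    (hΦ₂ : ∀ n n' : N, Φ₂ (t n n') = ⁅n, n'⁆) :
    Function.Surjective Φ₁ ∧ Function.Surjective Φ₂ ∧
      (∀ x : T, Φ₁ x = 0 → ∀ y : T, ⁅y, x⁆ = 0) ∧
      (∀ x : T, Φ₂ x = 0 → ∀ y : T, ⁅x, y⁆ = 0 ∧ ⁅y, x⁆ = 0) ∧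
      ∀ (X₁ X₂ : Type u) [LieRing X₁] [LieAlgebra K X₁] [LieRing X₂] [LieAlgebra K X₂]
        (δX : X₁ →ₗ⁅K⁆ X₂) (actX : X₂ →ₗ[K] X₁ →ₗ[K] X₁) (brX : X₂ →ₗ[K] X₂ →ₗ[K] X₁),
        LieXMod K X₁ X₂ δX actX → LieBraiding K X₁ X₂ δX actX brX →
        ∀ (f₁ : X₁ →ₗ⁅K⁆ M) (f₂ : X₂ →ₗ⁅K⁆ N),
        (∀ (x : X₂) (ξ : X₁), f₁ (actX x ξ) = act (f₂ x) (f₁ ξ)) →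
        (∀ ξ : X₁, d (f₁ ξ) = f₂ (δX ξ)) →
        (∀ x y : X₂, f₁ (brX x y) = br (f₂ x) (f₂ y)) →
        Function.Surjective f₁ → Function.Surjective f₂ →
        (∀ ξ : X₁, f₁ ξ = 0 → ∀ x : X₂, actX x ξ = 0) →
        (∀ x : X₂, f₂ x = 0 → ∀ y : X₂, brX x y = 0 ∧ brX y x = 0) →
        ∃! h : (T →ₗ⁅K⁆ X₁) × (T →ₗ⁅K⁆ X₂),
          (∀ x y : T, h.1 ⁅x, y⁆ = actX (h.2 x) (h.1 y)) ∧
          (∀ x : T, δX (h.1 x) = h.2 x) ∧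
          (∀ x y : T, h.1 ⁅x, y⁆ = brX (h.2 x) (h.2 y)) ∧
          (∀ x : T, f₁ (h.1 x) = Φ₁ x) ∧ (∀ x : T, f₂ (h.2 x) = Φ₂ x) := by
  have hL : ∀ x y : T, ⁅x, y⁆ = t (Φ₂ x) (Φ₂ y) := hT.lie_eq_tmul (Φ := Φ₂.toLinearMap) hΦ₂
  have hdΦ₁ : ∀ x, d (Φ₁ x) = Φ₂ x :=
    LieHom.congr_fun (hT.lieHom_ext (φ := d.comp Φ₁) fun a b => by simp [hΦ₁, hΦ₂, hB.b1])
  have hΦ₂_surj : Function.Surjective Φ₂ :=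
    Φ₂.surjective_of_lieSpan_eq_top hperf.2 fun _ ⟨a, b, hab⟩ => ⟨t a b, hab ▸ hΦ₂ a b⟩
  refine ⟨Φ₁.surjective_of_lieSpan_eq_top hperf.1 fun _ ⟨a, b, hab⟩ => ⟨t a b, hab ▸ hΦ₁ a b⟩,
    hΦ₂_surj, fun x hx y => ?_, fun x hx y => ?_, ?_⟩
  · rw [hL, ← hdΦ₁ x, hx, map_zero, map_zero]
  · simp [hL, hx]
  · intro X₁ X₂ _ _ _ _ δX actX brX hXX hBX f₁ f₂ _ _ hf_br _ hf₂ _ hker₂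
    exact hT.existsUnique_lift_of_central hΦ₁ hΦ₂ hΦ₂_surj hXX hBX hf_br hf₂ hker₂

theorem universal_central_extension_of_perfect (K : Type u) [CommRing K] (M N : Type u) [LieRing M] [LieAlgebra K M]
    [LieRing N] [LieAlgebra K N] (d : M →ₗ⁅K⁆ N) (act : N →ₗ[K] M →ₗ[K] M)
    (br : N →ₗ[K] N →ₗ[K] M) (hX : LieXMod K M N d act)
    (hB : LieBraiding K M N d act br)
    (hperf : LieSubalgebra.lieSpan K M {x : M | ∃ n n' : N, x = br n n'} = ⊤ ∧
      LieSubalgebra.lieSpan K N {x : N | ∃ a b : N, x = ⁅a, b⁆} = ⊤)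
    (T : Type u) [LieRing T] [LieAlgebra K T] (t : N →ₗ[K] N →ₗ[K] T)
    (hT : IsNATensorSq K N T t) (Φ₁ : T →ₗ⁅K⁆ M) (Φ₂ : T →ₗ⁅K⁆ N)
    (hΦ₁ : ∀ n n' : N, Φ₁ (t n n') = br n n')
    (hΦ₂ : ∀ n n' : N, Φ₂ (t n n') = ⁅n, n'⁆) :
    Function.Surjective Φ₁ ∧ Function.Surjective Φ₂ ∧
      (∀ x : T, Φ₁ x = 0 → ∀ y : T, ⁅y, x⁆ = 0) ∧
      (∀ x : T, Φ₂ x = 0 → ∀ y : T, ⁅x, y⁆ = 0 ∧ ⁅y, x⁆ = 0) ∧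
      ∀ (X₁ X₂ : Type u) [LieRing X₁] [LieAlgebra K X₁] [LieRing X₂] [LieAlgebra K X₂]
        (δX : X₁ →ₗ⁅K⁆ X₂) (actX : X₂ →ₗ[K] X₁ →ₗ[K] X₁) (brX : X₂ →ₗ[K] X₂ →ₗ[K] X₁),
        LieXMod K X₁ X₂ δX actX → LieBraiding K X₁ X₂ δX actX brX →
        ∀ (f₁ : X₁ →ₗ⁅K⁆ M) (f₂ : X₂ →ₗ⁅K⁆ N),
        (∀ (x : X₂) (ξ : X₁), f₁ (actX x ξ) = act (f₂ x) (f₁ ξ)) →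
        (∀ ξ : X₁, d (f₁ ξ) = f₂ (δX ξ)) →
        (∀ x y : X₂, f₁ (brX x y) = br (f₂ x) (f₂ y)) →
        Function.Surjective f₁ → Function.Surjective f₂ →
        (∀ ξ : X₁, f₁ ξ = 0 → ∀ x : X₂, actX x ξ = 0) →
        (∀ x : X₂, f₂ x = 0 → ∀ y : X₂, brX x y = 0 ∧ brX y x = 0) →
        ∃! h : (T →ₗ⁅K⁆ X₁) × (T →ₗ⁅K⁆ X₂),
          (∀ x y : T, h.1 ⁅x, y⁆ = actX (h.2 x) (h.1 y)) ∧
          (∀ x : T, δX (h.1 x) = h.2 x) ∧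
          (∀ x y : T, h.1 ⁅x, y⁆ = brX (h.2 x) (h.2 y)) ∧
          (∀ x : T, f₁ (h.1 x) = Φ₁ x) ∧ (∀ x : T, f₂ (h.2 x) = Φ₂ x) :=
  universal_central_extension_of_perfect_general K M N d act br hB hperf T t hT Φ₁ Φ₂ hΦ₁ hΦ₂
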